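/- Let S ⊆ {-1,0,1}² be a step set with nonnegative weights p_{u,v} summing to 1, and let K(x,y) = xy(Σ_{(u,v)∈S} p_{u,v} x^{-u} y^{-v} − 1), a polynomial in x and y. For every function h : ℤ² → ℝ with h(i,j) = 0 whenever i < 0 or j < 0, the following identity holds in the ring of formal power series ℝ[[x,y]]: K(x,y)·H(x,y) = y·K(x,0)·B(x) + x·K(0,y)·C(y) − xy·K(0,0)·h(0,0) + xy·G(x,y), where H(x,y) = Σ_{i,j≥0} h(i,j) x^{i+1} y^{j+1}, B(x) = Σ_{i≥0} h(i,0) x^{i+1}, C(y) = Σ_{j≥0} h(0,j) y^{j+1}, and G(x,y) = Σ_{i,j≥0} (Δh)(i,j) x^{i+1} y^{j+1}. -/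

import Mathlib

open Finset

/-- The discrete Laplacian associated with weights `p` on the step set `{-1,0,1}²`:
`(Δh)(i,j) = Σ_{(u,v)} p u v · h(i+u, j+v) − h(i,j)` for `i,j ≥ 0`, and `0` otherwise. -/
noncomputable def dLap (p : ℤ → ℤ → ℝ) (h : ℤ → ℤ → ℝ) : ℤ → ℤ → ℝ :=
  fun i j =>
    if 0 ≤ i ∧ 0 ≤ j then
      (∑ u ∈ ({-1, 0, 1} : Finset ℤ), ∑ v ∈ ({-1, 0, 1} : Finset ℤ),
        p u v * h (i + u) (j + v)) - h i j
    else 0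

/-- The kernel `K(x,y) = xy(Σ_{(u,v)} p u v · x^{-u} y^{-v} − 1)
= Σ_{(u,v)} p u v · x^{1-u} y^{1-v} − xy`, as a power series in `x = X 0`, `y = X 1`. -/
noncomputable def walkKernel (p : ℤ → ℤ → ℝ) : MvPowerSeries (Fin 2) ℝ :=
  (∑ u ∈ ({-1, 0, 1} : Finset ℤ), ∑ v ∈ ({-1, 0, 1} : Finset ℤ),
      (MvPowerSeries.C : ℝ →+* MvPowerSeries (Fin 2) ℝ) (p u v) * (MvPowerSeries.X 0) ^ (1 - u).toNat *
        (MvPowerSeries.X 1) ^ (1 - v).toNat) -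
    MvPowerSeries.X 0 * MvPowerSeries.X 1

/-- `K(x,0) = Σ_u p u 1 · x^{1-u}`, the kernel evaluated at `y = 0`. -/
noncomputable def walkKernelX (p : ℤ → ℤ → ℝ) : MvPowerSeries (Fin 2) ℝ :=
  ∑ u ∈ ({-1, 0, 1} : Finset ℤ),
    (MvPowerSeries.C : ℝ →+* MvPowerSeries (Fin 2) ℝ) (p u 1) * (MvPowerSeries.X 0) ^ (1 - u).toNat

/-- `K(0,y) = Σ_v p 1 v · y^{1-v}`, the kernel evaluated at `x = 0`. -/
noncomputable def walkKernelY (p : ℤ → ℤ → ℝ) : MvPowerSeries (Fin 2) ℝ :=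
  ∑ v ∈ ({-1, 0, 1} : Finset ℤ),
    (MvPowerSeries.C : ℝ →+* MvPowerSeries (Fin 2) ℝ) (p 1 v) * (MvPowerSeries.X 1) ^ (1 - v).toNat

/-- The generating function `Σ_{i,j≥0} g(i,j) x^{i+1} y^{j+1}` of `g : ℤ² → ℝ` (assumed to
vanish off the quarter plane), as a power series: its coefficient on `x^a y^b` is
`g(a−1, b−1)` (which vanishes automatically if `a = 0` or `b = 0`). -/
noncomputable def genFun (g : ℤ → ℤ → ℝ) : MvPowerSeries (Fin 2) ℝ :=
  fun m => g ((m 0 : ℤ) - 1) ((m 1 : ℤ) - 1)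

/-- The generating function `B(x) = Σ_{i≥0} g(i,0) x^{i+1}` of the values of `g` on the
horizontal axis. -/
noncomputable def genFunX (g : ℤ → ℤ → ℝ) : MvPowerSeries (Fin 2) ℝ :=
  fun m => if m 1 = 0 then g ((m 0 : ℤ) - 1) 0 else 0

/-- The generating function `C(y) = Σ_{j≥0} g(0,j) y^{j+1}` of the values of `g` on the
vertical axis. -/
noncomputable def genFunY (g : ℤ → ℤ → ℝ) : MvPowerSeries (Fin 2) ℝ :=
  fun m => if m 0 = 0 then g 0 ((m 1 : ℤ) - 1) else 0

/-! Multiplying by `x^s y^t` shifts an array that vanishes off the quarter plane, so every term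
of the equation is the generating function of an explicit array, and the equation reduces to an
identity between arrays. In the interior of the quarter plane that identity is the definition of
`Δh`; on the axes `i = 0` and `j = 0` the Dirichlet condition kills the steps that leave the
quarter plane, and what survives are the boundary terms `y K(x,0) B(x)` and `x K(0,y) C(y)`, whose
common corner `(0,0)` is counted twice. -/

open MvPowerSeries

section GeneratingFunctions

variable {g : ℤ → ℤ → ℝ}

lemma coeff_genFun (g : ℤ → ℤ → ℝ) (m : Fin 2 →₀ ℕ) :
    coeff m (genFun g) = g ((m 0 : ℤ) - 1) ((m 1 : ℤ) - 1) := rfl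

lemma genFun_add (f g : ℤ → ℤ → ℝ) :
    genFun (fun i j => f i j + g i j) = genFun f + genFun g := rfl

lemma genFun_sub (f g : ℤ → ℤ → ℝ) :
    genFun (fun i j => f i j - g i j) = genFun f - genFun g := rfl

lemma genFun_sum {ι : Type*} (s : Finset ι) (f : ι → ℤ → ℤ → ℝ) :
    genFun (fun i j => ∑ k ∈ s, f k i j) = ∑ k ∈ s, genFun (f k) := by
  ext m
  rw [map_sum]
  rfl

lemma C_mul_genFun (c : ℝ) (g : ℤ → ℤ → ℝ) :
    C c * genFun g = genFun (fun i j => c * g i j) := by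
  ext m
  rw [coeff_C_mul]
  rfl

lemma X_zero_pow_mul_genFun (hg : ∀ i j, i < 0 → g i j = 0) (s : ℕ) :
    X 0 ^ s * genFun g = genFun (fun i j => g (i - s) j) := by
  ext m
  rw [X_pow_eq, coeff_monomial_mul, coeff_genFun, coeff_genFun, one_mul]
  split_ifs with hs <;> rw [Finsupp.single_le_iff] at hs
  · simp [Nat.cast_sub hs, sub_right_comm]
  · exact (hg _ _ (by omega)).symm

lemma X_one_pow_mul_genFun (hg : ∀ i j, j < 0 → g i j = 0) (t : ℕ) :
    X 1 ^ t * genFun g = genFun (fun i j => g i (j - t)) := by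
  ext m
  rw [X_pow_eq, coeff_monomial_mul, coeff_genFun, coeff_genFun, one_mul]
  split_ifs with ht <;> rw [Finsupp.single_le_iff] at ht
  · simp [Nat.cast_sub ht, sub_right_comm]
  · exact (hg _ _ (by omega)).symm

lemma C_mul_X_pow_mul_X_pow_mul_genFun (hg : ∀ i j, i < 0 ∨ j < 0 → g i j = 0)
    (c : ℝ) (s t : ℕ) :
    C c * X 0 ^ s * X 1 ^ t * genFun g = genFun (fun i j => c * g (i - s) (j - t)) := by
  rw [mul_assoc, mul_assoc, X_one_pow_mul_genFun (fun i j hj => hg i j (.inr hj)),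
    X_zero_pow_mul_genFun (fun i j hi => hg _ _ (.inl (by omega))), C_mul_genFun]

lemma X_zero_mul_X_one_mul_genFun (hg : ∀ i j, i < 0 ∨ j < 0 → g i j = 0) :
    X 0 * X 1 * genFun g = genFun (fun i j => g (i - 1) (j - 1)) := by
  simpa using C_mul_X_pow_mul_X_pow_mul_genFun hg 1 1 1

lemma X_one_mul_genFunX (g : ℤ → ℤ → ℝ) :
    X 1 * genFunX g = genFun (fun i j => if j = 0 then g i 0 else 0) := by
  ext m
  rw [X_def, coeff_monomial_mul, coeff_genFun, one_mul]
  split_ifs with h1 h2 <;> rw [Finsupp.single_le_iff] at h1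
  · show genFunX g _ = _
    simp [genFunX]
    omega
  · show genFunX g _ = 0
    simp [genFunX]
    omega
  · omega

lemma X_zero_mul_genFunY (g : ℤ → ℤ → ℝ) :
    X 0 * genFunY g = genFun (fun i j => if i = 0 then g 0 j else 0) := by
  ext m
  rw [X_def, coeff_monomial_mul, coeff_genFun, one_mul]
  split_ifs with h0 h2 <;> rw [Finsupp.single_le_iff] at h0
  · show genFunY g _ = _
    simp [genFunY]
    omega
  · show genFunY g _ = 0
    simp [genFunY]
    omega
  · omega

lemma X_zero_mul_X_one_mul_C (c : ℝ) :
    X 0 * X 1 * C c = genFun (fun i j => if i = 0 ∧ j = 0 then c else 0) := by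
  ext m
  rw [coeff_mul_C, X_def, X_def, monomial_mul_monomial, coeff_monomial, coeff_genFun]
  simp only [Finsupp.ext_iff, Fin.forall_fin_two, Finsupp.add_apply, Finsupp.single_apply]
  split_ifs <;> simp_all; omega

end GeneratingFunctions

lemma sum_neg_one_zero_one {M : Type*} [AddCommMonoid M] (f : ℤ → M) :
    ∑ u ∈ ({-1, 0, 1} : Finset ℤ), f u = f (-1) + f 0 + f 1 := by
  simp [add_assoc]

lemma toNat_one_sub_of_mem {u : ℤ} (hu : u ∈ ({-1, 0, 1} : Finset ℤ)) :
    ((1 - u).toNat : ℤ) = 1 - u :=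
  Int.toNat_of_nonneg (by simp at hu; omega)

section Kernel

variable (p : ℤ → ℤ → ℝ) {g : ℤ → ℤ → ℝ}

lemma walkKernel_mul_genFun (hg : ∀ i j, i < 0 ∨ j < 0 → g i j = 0) :
    walkKernel p * genFun g = genFun (fun i j =>
      (∑ u ∈ ({-1, 0, 1} : Finset ℤ), ∑ v ∈ ({-1, 0, 1} : Finset ℤ),
        p u v * g (i - 1 + u) (j - 1 + v)) - g (i - 1) (j - 1)) := by
  rw [walkKernel, sub_mul, X_zero_mul_X_one_mul_genFun hg, genFun_sub, genFun_sum, Finset.sum_mul]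
  refine congrArg (· - _) (Finset.sum_congr rfl fun u hu => ?_)
  rw [genFun_sum, Finset.sum_mul]
  refine Finset.sum_congr rfl fun v hv => ?_
  rw [C_mul_X_pow_mul_X_pow_mul_genFun hg, toNat_one_sub_of_mem hu, toNat_one_sub_of_mem hv]
  simp only [sub_sub_eq_add_sub, add_sub_right_comm]

lemma X_one_mul_walkKernelX_mul_genFunX (hg : ∀ i j, i < 0 → g i j = 0) :
    X 1 * walkKernelX p * genFunX g = genFun (fun i j =>
      ∑ u ∈ ({-1, 0, 1} : Finset ℤ), p u 1 * if j = 0 then g (i - 1 + u) 0 else 0) := by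
  rw [mul_comm (X 1), mul_assoc, X_one_mul_genFunX, walkKernelX, Finset.sum_mul, genFun_sum]
  refine Finset.sum_congr rfl fun u hu => ?_
  rw [mul_assoc, X_zero_pow_mul_genFun (fun i j hi => by simp [hg i 0 hi]), C_mul_genFun,
    toNat_one_sub_of_mem hu]
  simp only [sub_sub_eq_add_sub, add_sub_right_comm]

lemma X_zero_mul_walkKernelY_mul_genFunY (hg : ∀ i j, j < 0 → g i j = 0) :
    X 0 * walkKernelY p * genFunY g = genFun (fun i j =>
      ∑ v ∈ ({-1, 0, 1} : Finset ℤ), p 1 v * if i = 0 then g 0 (j - 1 + v) else 0) := by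
  rw [mul_comm (X 0), mul_assoc, X_zero_mul_genFunY, walkKernelY, Finset.sum_mul, genFun_sum]
  refine Finset.sum_congr rfl fun v hv => ?_
  rw [mul_assoc, X_one_pow_mul_genFun (fun i j hj => by simp [hg 0 j hj]), C_mul_genFun,
    toNat_one_sub_of_mem hv]
  simp only [sub_sub_eq_add_sub, add_sub_right_comm]

end Kernel

lemma dLap_of_neg (p h : ℤ → ℤ → ℝ) {i j : ℤ} (hij : i < 0 ∨ j < 0) : dLap p h i j = 0 := by
  rw [dLap, if_neg (by omega)]

lemma sum_shift_eq_boundary_add_dLap (p h : ℤ → ℤ → ℝ)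
    (hD : ∀ i j : ℤ, i < 0 ∨ j < 0 → h i j = 0) (i j : ℤ) :
    (∑ u ∈ ({-1, 0, 1} : Finset ℤ), ∑ v ∈ ({-1, 0, 1} : Finset ℤ),
        p u v * h (i - 1 + u) (j - 1 + v)) - h (i - 1) (j - 1) =
      (∑ u ∈ ({-1, 0, 1} : Finset ℤ), p u 1 * if j = 0 then h (i - 1 + u) 0 else 0) +
        (∑ v ∈ ({-1, 0, 1} : Finset ℤ), p 1 v * if i = 0 then h 0 (j - 1 + v) else 0) -
        (if i = 0 ∧ j = 0 then p 1 1 * h 0 0 else 0) + dLap p h (i - 1) (j - 1) := by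
  by_cases hinterior : 0 < i ∧ 0 < j
  · have hi : i ≠ 0 := by omega
    have hj : j ≠ 0 := by omega
    simp only [dLap, if_pos (show 0 ≤ i - 1 ∧ 0 ≤ j - 1 by omega), hi, hj, false_and, if_false,
      mul_zero, Finset.sum_const_zero, zero_add, sub_zero]
  · rw [dLap_of_neg p h (by omega)]
    rcases lt_trichotomy i 0 with hi | rfl | hi <;> rcases lt_trichotomy j 0 with hj | rfl | hj <;>
      simp (disch := omega) [sum_neg_one_zero_one, hD]

theorem kernel_functional_equation
    (p : ℤ → ℤ → ℝ)
    (h : ℤ → ℤ → ℝ) (hD : ∀ i j : ℤ, i < 0 ∨ j < 0 → h i j = 0) :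
    walkKernel p * genFun h =
      MvPowerSeries.X 1 * walkKernelX p * genFunX h +
        MvPowerSeries.X 0 * walkKernelY p * genFunY h -
        MvPowerSeries.X 0 * MvPowerSeries.X 1 *
          (MvPowerSeries.C : ℝ →+* MvPowerSeries (Fin 2) ℝ) (p 1 1 * h 0 0) +
        MvPowerSeries.X 0 * MvPowerSeries.X 1 * genFun (dLap p h) := by
  rw [walkKernel_mul_genFun p hD,
    X_one_mul_walkKernelX_mul_genFunX p fun i j hi => hD i j (.inl hi),
    X_zero_mul_walkKernelY_mul_genFunY p fun i j hj => hD i j (.inr hj),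
    X_zero_mul_X_one_mul_C, X_zero_mul_X_one_mul_genFun fun i j => dLap_of_neg p h,
    ← genFun_add, ← genFun_sub, ← genFun_add]
  exact congrArg genFun (funext₂ (sum_shift_eq_boundary_add_dLap p h hD))
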